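/- arXiv:1707.01267 — 4 statements merged into one kernel-verified Lean document; each statement's English description precedes it below -/
import Mathlib

section
/- Let 𝔛 = (Γ, c⁽⁰⁾) be a configuration and call a colour c₀ nonempty if for every v ∈ Γ there is at most one w with c⁽⁰⁾(v,w) = c₀. Then for every k ≥ 0 and all v₁, v₂, w₁, w₂ ∈ Γ, if c^{(k)}(v₁,w₁) = c^{(k)}(v₂,w₂) under the Weisfeiler–Leman iteration, then for every sequence of nonempty colours (c₁,...,c_l) with l ≤ 2^k, there is a walk from v₁ to w₁ with edge colours c₁,...,c_l (i.e., vertices u₀=v₁, u₁, ..., u_l=w₁ with c⁽⁰⁾(u_{i−1},u_i)=c_i) if and only if there is such a walk from v₂ to w₂. (WL colours at step k know all walks of length ≤ 2^k.) -/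
universe u v

/-- The type of colours after `k` Weisfeiler-Leman iterations. -/
def WLColor (C : Type v) : ℕ → Type v
  | 0 => C
  | k + 1 => WLColor C k × (WLColor C k → WLColor C k → ℕ)

/-- The Weisfeiler-Leman iterated colouring. -/
noncomputable def WLiter {Γ : Type u} {C : Type v} (c : Γ → Γ → C) :
    (k : ℕ) → Γ → Γ → WLColor C k
  | 0 => c
  | k + 1 => fun v₁ v₂ =>
      (WLiter c k v₁ v₂,
        fun c₁ c₂ => Nat.card {w : Γ // WLiter c k v₁ w = c₁ ∧ WLiter c k w v₂ = c₂})

/-- The number of nontrivial Weisfeiler-Leman iterations: the first `k` at which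
the step `k → k+1` does not refine the partition of `Γ × Γ`. -/
noncomputable def WLnum {Γ : Type u} {C : Type v} (c : Γ → Γ → C) : ℕ :=
  sInf {k | ∀ v₁ v₂ u₁ u₂ : Γ,
    WLiter c (k + 1) v₁ v₂ = WLiter c (k + 1) u₁ u₂ ↔
      WLiter c k v₁ v₂ = WLiter c k u₁ u₂}

/-- A colour is nonempty if each vertex has at most one outgoing edge of that colour. -/
def NonemptyColor {Γ : Type u} {C : Type v} (c : Γ → Γ → C) (c₀ : C) : Prop :=
  ∀ v w w' : Γ, c v w = c₀ → c v w' = c₀ → w = w'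

/-- Existence of a directed walk of length `n`. -/
def dWalk {Γ : Type u} (R : Γ → Γ → Prop) : ℕ → Γ → Γ → Prop
  | 0, v, w => v = w
  | n + 1, v, w => ∃ u, R v u ∧ dWalk R n u w

/-- Directed graph distance. -/
noncomputable def ddist {Γ : Type u} (R : Γ → Γ → Prop) (v w : Γ) : ℕ :=
  sInf {n | dWalk R n v w}

/-- Diameter of a directed graph. -/
noncomputable def ddiam {Γ : Type u} (R : Γ → Γ → Prop) : ℕ :=
  sSup (Set.range fun p : Γ × Γ => ddist R p.1 p.2)

/-- `ColorWalk c x y cs ws` means `ws` is the list of intermediate vertices of a walk from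
`x` to `y` whose consecutive edges have the colours listed in `cs`. -/
def ColorWalk {Γ : Type u} {C : Type v} (c : Γ → Γ → C) :
    Γ → Γ → List C → List Γ → Prop
  | x, y, [d], [] => c x y = d
  | x, y, d :: ds, u :: us => c x u = d ∧ ColorWalk c u y ds us
  | _, _, _, _ => False

/-! Induction on `k`. A walk of length at most `2^(k+1)` splits at a middle vertex `u` into two
walks of length at most `2^k`. Equal step-`(k+1)` colours of `(v₁, w₁)` and `(v₂, w₂)` mean equal
counts of intermediate vertices by pairs of step-`k` colours, so some `u'` satisfies
`c^(k)(v₁, u) = c^(k)(v₂, u')` and `c^(k)(u, w₁) = c^(k)(u', w₂)`; the induction hypothesis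
transfers both halves of the walk through `u'`. -/

section ColorWalk

variable {Γ : Type u} {C : Type v} (c : Γ → Γ → C)

def HasColorWalk (x y : Γ) (cs : List C) : Prop :=
  ∃ ws, ColorWalk c x y cs ws

theorem colorWalk_cons_cons (x y u : Γ) (d : C) (ds : List C) (us : List Γ) :
    ColorWalk c x y (d :: ds) (u :: us) ↔ c x u = d ∧ ColorWalk c u y ds us := by
  cases ds <;> exact Iff.rfl

theorem not_hasColorWalk_nil (x y : Γ) : ¬ HasColorWalk c x y [] := by
  rintro ⟨_ | _, h⟩ <;> exact h

theorem hasColorWalk_singleton (x y : Γ) (d : C) : HasColorWalk c x y [d] ↔ c x y = d := by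
  refine ⟨?_, fun h => ⟨[], h⟩⟩
  rintro ⟨_ | ⟨u, us⟩, h⟩
  · exact h
  · exact absurd ⟨us, ((colorWalk_cons_cons c ..).mp h).2⟩ (not_hasColorWalk_nil c u y)

theorem hasColorWalk_cons (x y : Γ) (d : C) {ds : List C} (hds : ds ≠ []) :
    HasColorWalk c x y (d :: ds) ↔ ∃ u, c x u = d ∧ HasColorWalk c u y ds := by
  constructor
  · rintro ⟨_ | ⟨u, us⟩, h⟩
    · cases ds with
      | nil => exact absurd rfl hds
      | cons _ _ => exact h.elim
    · rw [colorWalk_cons_cons] at h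
      exact ⟨u, h.1, us, h.2⟩
  · rintro ⟨u, hxu, ws, hws⟩
    exact ⟨u :: ws, (colorWalk_cons_cons c ..).mpr ⟨hxu, hws⟩⟩

theorem hasColorWalk_append (x y : Γ) {cs₁ cs₂ : List C} (h₁ : cs₁ ≠ []) (h₂ : cs₂ ≠ []) :
    HasColorWalk c x y (cs₁ ++ cs₂) ↔ ∃ u, HasColorWalk c x u cs₁ ∧ HasColorWalk c u y cs₂ := by
  induction cs₁ generalizing x with
  | nil => exact absurd rfl h₁
  | cons d ds ih =>
    rcases eq_or_ne ds [] with rfl | hds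
    · simp only [List.singleton_append, hasColorWalk_cons c x y d h₂, hasColorWalk_singleton]
    · simp only [List.cons_append,
        hasColorWalk_cons c _ _ d (List.append_ne_nil_of_left_ne_nil hds _),
        hasColorWalk_cons c _ _ d hds, ih _ hds]
      exact ⟨fun ⟨a, ha, u, h, h'⟩ => ⟨u, ⟨a, ha, h⟩, h'⟩,
        fun ⟨u, ⟨a, ha, h⟩, h'⟩ => ⟨a, ha, u, h, h'⟩⟩

end ColorWalk

theorem List.exists_append_of_lt_length_le_two_mul {α : Type*} {cs : List α} {n : ℕ}
    (h : n < cs.length) (h' : cs.length ≤ 2 * n) :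
    ∃ cs₁ cs₂, cs = cs₁ ++ cs₂ ∧ cs₁ ≠ [] ∧ cs₂ ≠ [] ∧ cs₁.length ≤ n ∧ cs₂.length ≤ n := by
  refine ⟨cs.take n, cs.drop n, (List.take_append_drop n cs).symm, ?_, ?_, ?_, ?_⟩ <;>
    simp only [ne_eq, ← List.length_eq_zero_iff, List.length_take, List.length_drop] <;> omega

section WLiter

variable {Γ : Type u} {C : Type v} (c : Γ → Γ → C)

theorem WLiter_eq_of_succ_eq {k : ℕ} {v₁ w₁ v₂ w₂ : Γ}
    (h : WLiter c (k + 1) v₁ w₁ = WLiter c (k + 1) v₂ w₂) :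
    WLiter c k v₁ w₁ = WLiter c k v₂ w₂ :=
  congrArg Prod.fst h

theorem exists_WLiter_eq_of_succ_eq [Finite Γ] {k : ℕ} {v₁ w₁ v₂ w₂ : Γ}
    (h : WLiter c (k + 1) v₁ w₁ = WLiter c (k + 1) v₂ w₂) (u : Γ) :
    ∃ u', WLiter c k v₁ u = WLiter c k v₂ u' ∧ WLiter c k u w₁ = WLiter c k u' w₂ := by
  set a := WLiter c k v₁ u
  set b := WLiter c k u w₁
  have hcard : Nat.card {w // WLiter c k v₁ w = a ∧ WLiter c k w w₁ = b} =
      Nat.card {w // WLiter c k v₂ w = a ∧ WLiter c k w w₂ = b} :=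
    congrFun (congrFun (congrArg Prod.snd h) a) b
  have hpos : Nat.card {w // WLiter c k v₁ w = a ∧ WLiter c k w w₁ = b} ≠ 0 :=
    Nat.card_ne_zero.mpr ⟨⟨⟨u, rfl, rfl⟩⟩, inferInstance⟩
  obtain ⟨⟨u', hv, hw⟩⟩ := (Nat.card_ne_zero.mp (hcard ▸ hpos)).1
  exact ⟨u', hv.symm, hw.symm⟩

theorem hasColorWalk_of_WLiter_eq [Finite Γ] (k : ℕ) {v₁ w₁ v₂ w₂ : Γ}
    (h : WLiter c k v₁ w₁ = WLiter c k v₂ w₂) {cs : List C} (hlen : cs.length ≤ 2 ^ k)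
    (hwalk : HasColorWalk c v₁ w₁ cs) : HasColorWalk c v₂ w₂ cs := by
  induction k generalizing v₁ w₁ v₂ w₂ cs with
  | zero =>
    match cs, hlen with
    | [], _ => exact absurd hwalk (not_hasColorWalk_nil c v₁ w₁)
    | [d], _ =>
      rw [hasColorWalk_singleton] at hwalk ⊢
      exact h.symm.trans hwalk
  | succ k ih =>
    rcases le_or_gt cs.length (2 ^ k) with hsmall | hbig
    · exact ih (WLiter_eq_of_succ_eq c h) hsmall hwalk
    obtain ⟨cs₁, cs₂, rfl, hne₁, hne₂, hlen₁, hlen₂⟩ :=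
      List.exists_append_of_lt_length_le_two_mul hbig (by rwa [← pow_succ'])
    rw [hasColorWalk_append c _ _ hne₁ hne₂] at hwalk ⊢
    obtain ⟨u, hwalk₁, hwalk₂⟩ := hwalk
    obtain ⟨u', hv, hw⟩ := exists_WLiter_eq_of_succ_eq c h u
    exact ⟨u', ih hv hlen₁ hwalk₁, ih hw hlen₂ hwalk₂⟩

end WLiter

theorem WL_knows_walks_general {Γ : Type u} {C : Type v} [Finite Γ] (c : Γ → Γ → C) :
    ∀ (k : ℕ) (v₁ w₁ v₂ w₂ : Γ), WLiter c k v₁ w₁ = WLiter c k v₂ w₂ →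
      ∀ cs : List C, cs.length ≤ 2 ^ k → (∀ d ∈ cs, NonemptyColor c d) →
        ((∃ ws : List Γ, ColorWalk c v₁ w₁ cs ws) ↔
          (∃ ws : List Γ, ColorWalk c v₂ w₂ cs ws)) :=
  fun k _ _ _ _ h _ hlen _ =>
    ⟨hasColorWalk_of_WLiter_eq c k h hlen, hasColorWalk_of_WLiter_eq c k h.symm hlen⟩

/-- WL colours at step `k` know all walks of nonempty colours of length at most `2^k`. -/
theorem WL_knows_walks {Γ : Type u} {C : Type v} [Finite Γ] (c : Γ → Γ → C)
    (hi : ∀ (c₀ : C) (v : Γ), c v v = c₀ → ∀ v₁ v₂ : Γ, c v₁ v₂ = c₀ → v₁ = v₂)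
    (hii : ∀ c₀ : C, ∃ c₀' : C, ∀ v₁ v₂ : Γ, c v₁ v₂ = c₀ → c v₂ v₁ = c₀') :
    ∀ (k : ℕ) (v₁ w₁ v₂ w₂ : Γ), WLiter c k v₁ w₁ = WLiter c k v₂ w₂ →
      ∀ cs : List C, cs.length ≤ 2 ^ k → (∀ d ∈ cs, NonemptyColor c d) →
        ((∃ ws : List Γ, ColorWalk c v₁ w₁ cs ws) ↔
          (∃ ws : List Γ, ColorWalk c v₂ w₂ cs ws)) :=
  WL_knows_walks_general c
end

section
/- Let 𝔛 be a classical configuration with exactly one empty colour, let Γ_𝔛 be the graph of nonempty-coloured pairs, and let φ be an automorphism of 𝔛 such that every nontrivial power of φ is fixed-point-free. If v, w ∈ Γ and k ≥ 0 satisfy d(v, φⁱ(w)) > 2^k in Γ_𝔛 for every integer i, then the Weisfeiler–Leman colours c^{(k)}(v, φⁱ(w)) are equal for all i. -/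
universe u v

/-!
Induction on `k`, for the whole orbit under any group `H` of automorphisms at once.
The colour of `(v, g w)` at step `k + 1` records how many `x` give each pair of step-`k`
colours of `(v, x)` and `(x, g w)`. Split the `x` according to whether their `H`-orbit comes
within `2^k` of `v`. If it does, the triangle inequality keeps the orbit of `w` beyond `2^k`
from `x`, so by induction the colour of `(x, g w)` does not depend on `g`. If it does not,
the colour of `(v, x)` is constant along the orbit of `x`, and moving `x` to `g⁻¹ x` turns
`(x, g w)` into `(g⁻¹ x, w)`. Fixing the first kind and moving the second kind is a bijection
matching the counts for `(v, g w)` with those for `(v, w)`.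
-/

open Equiv

section
variable {Γ : Type u} {C : Type v}

theorem dWalk_one {R : Γ → Γ → Prop} {a b : Γ} : dWalk R 1 a b ↔ R a b := by
  simp [dWalk]

theorem dWalk.add {R : Γ → Γ → Prop} {m n : ℕ} {a b d : Γ}
    (hab : dWalk R m a b) (hbd : dWalk R n b d) : dWalk R (m + n) a d := by
  induction m generalizing a with
  | zero => rw [dWalk] at hab; subst hab; simpa using hbd
  | succ m ih =>
    obtain ⟨x, hax, hxb⟩ := hab
    rw [Nat.succ_add]
    exact ⟨x, hax, ih hxb⟩

theorem dWalk.map {R : Γ → Γ → Prop} (f : Γ → Γ) (hf : ∀ a b, R a b → R (f a) (f b))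
    {n : ℕ} {a b : Γ} (h : dWalk R n a b) : dWalk R n (f a) (f b) := by
  induction n generalizing a with
  | zero => rw [dWalk] at h ⊢; rw [h]
  | succ n ih =>
    obtain ⟨x, hax, hxb⟩ := h
    exact ⟨f x, hf _ _ hax, ih hxb⟩

def colorAut (c : Γ → Γ → C) : Subgroup (Perm Γ) where
  carrier := {ψ | ∀ a b, c (ψ a) (ψ b) = c a b}
  mul_mem' hψ hχ a b := (hψ _ _).trans (hχ a b)
  one_mem' _ _ := rfl
  inv_mem' {ψ} hψ a b := by simpa using (hψ (ψ⁻¹ a) (ψ⁻¹ b)).symm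

theorem WLiter_succ_eq_of_perm (c : Γ → Γ → C) (k : ℕ) {v w v' w' : Γ}
    (h : WLiter c k v w = WLiter c k v' w') (σ : Perm Γ)
    (hσ : ∀ x, WLiter c k v' (σ x) = WLiter c k v x ∧ WLiter c k (σ x) w' = WLiter c k x w) :
    WLiter c (k + 1) v w = WLiter c (k + 1) v' w' := by
  refine congrArg₂ Prod.mk h (funext₂ fun c₁ c₂ => Nat.card_congr ?_)
  exact σ.subtypeEquiv fun x => by rw [(hσ x).1, (hσ x).2]

theorem colorAut_le_colorAut_WLiter (c : Γ → Γ → C) (k : ℕ) :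
    colorAut c ≤ colorAut (WLiter c k) := by
  intro ψ hψ
  induction k with
  | zero => exact hψ
  | succ k ih =>
    intro a b
    refine WLiter_succ_eq_of_perm c k (ih a b) ψ⁻¹ fun x => ⟨?_, ?_⟩
    · simpa using (ih a (ψ⁻¹ x)).symm
    · simpa using (ih (ψ⁻¹ x) b).symm

def ReachesOrbit (R : Γ → Γ → Prop) (H : Subgroup (Perm Γ)) (r : ℕ) (v w : Γ) : Prop :=
  ∃ g ∈ H, ∃ n ≤ r, dWalk R n v (g w)

namespace ReachesOrbit

variable {R : Γ → Γ → Prop} {H : Subgroup (Perm Γ)} {r s : ℕ} {v w x : Γ}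

theorem mono (h : ReachesOrbit R H r v w) (hrs : r ≤ s) : ReachesOrbit R H s v w :=
  let ⟨g, hg, n, hn, hwalk⟩ := h
  ⟨g, hg, n, hn.trans hrs, hwalk⟩

theorem apply_iff {g : Perm Γ} (hg : g ∈ H) :
    ReachesOrbit R H r v (g w) ↔ ReachesOrbit R H r v w := by
  constructor
  · rintro ⟨h, hh, n, hn, hwalk⟩
    exact ⟨h * g, H.mul_mem hh hg, n, hn, hwalk⟩
  · rintro ⟨h, hh, n, hn, hwalk⟩
    refine ⟨h * g⁻¹, H.mul_mem hh (H.inv_mem hg), n, hn, ?_⟩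
    simpa using hwalk

theorem trans (hRH : ∀ g ∈ H, ∀ a b, R a b → R (g a) (g b))
    (hvx : ReachesOrbit R H r v x) (hxw : ReachesOrbit R H s x w) :
    ReachesOrbit R H (r + s) v w := by
  obtain ⟨g, hg, m, hm, hvgx⟩ := hvx
  obtain ⟨h, hh, n, hn, hxhw⟩ := hxw
  refine ⟨g * h, H.mul_mem hg hh, m + n, by omega, hvgx.add ?_⟩
  exact hxhw.map g (hRH g hg)

end ReachesOrbit

theorem WLiter_apply_eq_of_not_reachesOrbit {c : Γ → Γ → C} {R : Γ → Γ → Prop}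
    {H : Subgroup (Perm Γ)} (hH : H ≤ colorAut c)
    (hRH : ∀ g ∈ H, ∀ a b, R a b → R (g a) (g b))
    (emp : C) (hemp : ∀ a b, ¬ R a b → c a b = emp) (k : ℕ) {v w : Γ}
    (hvw : ¬ ReachesOrbit R H (2 ^ k) v w) {g : Perm Γ} (hg : g ∈ H) :
    WLiter c k v (g w) = WLiter c k v w := by
  induction k generalizing v w g with
  | zero =>
    have hfar : ∀ h ∈ H, c v (h w) = emp := fun h hh =>
      hemp _ _ fun hR => hvw ⟨h, hh, 1, le_rfl, dWalk_one.2 hR⟩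
    exact (hfar g hg).trans (hfar 1 H.one_mem).symm
  | succ k ih =>
    classical
    set B : Γ → Prop := ReachesOrbit R H (2 ^ k) v
    have hB : ∀ x, ¬ B (g⁻¹ x) ↔ ¬ B x := fun x =>
      not_congr (ReachesOrbit.apply_iff (H.inv_mem hg))
    set σ : Perm Γ := Perm.ofSubtype (g⁻¹.subtypePerm (p := fun x => ¬ B x) hB)
    refine WLiter_succ_eq_of_perm c k ?_ σ fun x => ?_
    · exact ih (fun h => hvw (h.mono (Nat.pow_le_pow_right two_pos k.le_succ))) hg
    by_cases hx : B x
    · have hσx : σ x = x :=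
        Perm.ofSubtype_apply_of_not_mem (p := fun x => ¬ B x) _ (not_not.2 hx)
      rw [hσx]
      refine ⟨rfl, (ih (fun hxw => hvw ?_) hg).symm⟩
      simpa [pow_succ, mul_two] using ReachesOrbit.trans hRH hx hxw
    · have hσx : σ x = g⁻¹ x := Perm.ofSubtype_apply_of_mem (p := fun x => ¬ B x) _ hx
      rw [hσx]
      refine ⟨ih hx (H.inv_mem hg), ?_⟩
      simpa using (colorAut_le_colorAut_WLiter c k (hH hg) (g⁻¹ x) w).symm

end

theorem WL_orbit_colors_equal_general {Γ : Type u} {C : Type v} (c : Γ → Γ → C)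
    (emp : C) (hne : ∀ c₀ : C, c₀ ≠ emp → NonemptyColor c c₀)
    (R : Γ → Γ → Prop) (hR : ∀ v w : Γ, R v w ↔ NonemptyColor c (c v w))
    (φ : Equiv.Perm Γ) (hφc : ∀ v w : Γ, c (φ v) (φ w) = c v w)
    (v w : Γ) (k : ℕ)
    (hd : ∀ i : ℤ, ∀ n : ℕ, n ≤ 2 ^ k → ¬ dWalk R n v ((φ ^ i) w)) :
    ∀ i j : ℤ, WLiter c k v ((φ ^ i) w) = WLiter c k v ((φ ^ j) w) := by
  have hφ : Subgroup.zpowers φ ≤ colorAut c := Subgroup.zpowers_le.2 hφc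
  have hRφ : ∀ g ∈ Subgroup.zpowers φ, ∀ a b, R a b → R (g a) (g b) := fun g hg a b => by
    rw [hR, hR, hφ hg a b]
    exact id
  have hemp : ∀ a b, ¬ R a b → c a b = emp := fun a b hab =>
    by_contra fun h => hab ((hR a b).2 (hne _ h))
  have hvw : ¬ ReachesOrbit R (Subgroup.zpowers φ) (2 ^ k) v w := by
    rintro ⟨g, hg, n, hn, hwalk⟩
    obtain ⟨i, rfl⟩ := Subgroup.mem_zpowers_iff.1 hg
    exact hd i n hn hwalk
  intro i j
  rw [WLiter_apply_eq_of_not_reachesOrbit hφ hRφ emp hemp k hvw (Subgroup.zpow_mem_zpowers φ i),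
    WLiter_apply_eq_of_not_reachesOrbit hφ hRφ emp hemp k hvw (Subgroup.zpow_mem_zpowers φ j)]

/-- If all the `φⁱ(w)` are at distance greater than `2^k` from `v`, then the pairs
`(v, φⁱ(w))` all have the same Weisfeiler-Leman colour at step `k`. -/
theorem WL_orbit_colors_equal {Γ : Type u} {C : Type v} [Finite Γ] (c : Γ → Γ → C)
    (hi : ∀ (c₀ : C) (v : Γ), c v v = c₀ → ∀ v₁ v₂ : Γ, c v₁ v₂ = c₀ → v₁ = v₂)
    (hii : ∀ c₀ : C, ∃ c₀' : C, ∀ v₁ v₂ : Γ, c v₁ v₂ = c₀ → c v₂ v₁ = c₀')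
    (emp : C) (hempty : ¬ NonemptyColor c emp)
    (hne : ∀ c₀ : C, c₀ ≠ emp → NonemptyColor c c₀)
    (R : Γ → Γ → Prop) (hR : ∀ v w : Γ, R v w ↔ NonemptyColor c (c v w))
    (φ : Equiv.Perm Γ) (hφc : ∀ v w : Γ, c (φ v) (φ w) = c v w)
    (hffp : ∀ i : ℤ, φ ^ i ≠ 1 → ∀ v : Γ, (φ ^ i) v ≠ v)
    (v w : Γ) (k : ℕ)
    (hd : ∀ i : ℤ, ∀ n : ℕ, n ≤ 2 ^ k → ¬ dWalk R n v ((φ ^ i) w)) :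
    ∀ i j : ℤ, WLiter c k v ((φ ^ i) w) = WLiter c k v ((φ ^ j) w) :=
  WL_orbit_colors_equal_general c emp hne R hR φ hφc v w k hd
end

section
/- Let G = SL_n(F_q) with q > 2, S a generating set with I_n ∈ S = S⁻¹, V the set of linearly independent k-tuples of vectors of F_qⁿ (0 < k < n) with the diagonal action, and 𝔛_S the Schreier configuration of Sch(V,S). If p is the smallest prime dividing q − 1, then WL(𝔛_S) ≥ log₂(diam Sch(V,S)) − log₂(p − 1) − 3. -/
/-!
Scaling by a unit `u ∈ F_q^×` of prime order `p` commutes with `SL_n(F_q)`, so it is a fixed-point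
free automorphism of `𝔛_S`. Weisfeiler–Leman cannot see it from far away: if `x` is at distance
more than `2 ^ h` from the whole `⟨u⟩`-orbit of `y`, then `(x, y)` and `(x, u • y)` get the same
colour after `h` iterations. On the other hand, since every edge colour is nonempty, the colour of
`(x, y)` after `h` iterations determines `y` from `x` once `y` is within `2 ^ h` of `x`, and as the
colouring is stable from `WL(𝔛_S)` on, `h` may be taken arbitrarily large. Hence every vertex lies
within `E = 2 ^ WL(𝔛_S)` of every `⟨u⟩`-orbit. Either some `u ^ j • y ≠ y` is within `2E + 1` of
`y`, and since `⟨u⟩` has prime order its powers reach the whole orbit within `(p - 1)(2E + 1)`, or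
the ball of radius `E` around `y` is closed under edges. Either way
`diam ≤ (p - 1) · 2 ^ (WL(𝔛_S) + 2)`.
-/

universe u v

/-- Linearly independent `k`-tuples of vectors of `F^n`. -/
def IndepTuples (F : Type*) [Field F] (n k : ℕ) : Type _ :=
  {v : Fin k → Fin n → F // LinearIndependent F v}


namespace dWalk

variable {Γ : Type u} {R : Γ → Γ → Prop}

theorem of_rel {x y : Γ} (h : R x y) : dWalk R 1 x y := ⟨y, h, rfl⟩

theorem append {a b : ℕ} {x y z : Γ} (h₁ : dWalk R a x y) (h₂ : dWalk R b y z) :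
    dWalk R (a + b) x z := by
  induction a generalizing x with
  | zero => cases h₁; simpa using h₂
  | succ a ih =>
    obtain ⟨u, hxu, hu⟩ := h₁
    rw [Nat.add_right_comm]
    exact ⟨u, hxu, ih hu⟩

theorem split {a b : ℕ} {x z : Γ} (h : dWalk R (a + b) x z) :
    ∃ y, dWalk R a x y ∧ dWalk R b y z := by
  induction a generalizing x with
  | zero => exact ⟨x, rfl, by simpa using h⟩
  | succ a ih =>
    rw [Nat.add_right_comm] at h
    obtain ⟨u, hxu, hu⟩ := h
    obtain ⟨y, huy, hyz⟩ := ih hu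
    exact ⟨y, ⟨u, hxu, huy⟩, hyz⟩

theorem map_s15 {f : Γ → Γ} (hf : ∀ x y, R x y → R (f x) (f y)) {a : ℕ} {x y : Γ}
    (h : dWalk R a x y) : dWalk R a (f x) (f y) := by
  induction a generalizing x with
  | zero => exact congrArg f h
  | succ a ih =>
    obtain ⟨u, hxu, hu⟩ := h
    exact ⟨f u, hf _ _ hxu, ih hu⟩

theorem symm (hR : ∀ x y, R x y → R y x) {a : ℕ} {x y : Γ} (h : dWalk R a x y) :
    dWalk R a y x := by
  induction a generalizing x with
  | zero => exact Eq.symm h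
  | succ a ih =>
    obtain ⟨u, hxu, hu⟩ := h
    exact (ih hu).append (of_rel (hR _ _ hxu))

end dWalk

section ddist

variable {Γ : Type u} {R : Γ → Γ → Prop}

theorem ddist_le {a : ℕ} {x y : Γ} (h : dWalk R a x y) : ddist R x y ≤ a :=
  Nat.sInf_le h

theorem ddist_self (x : Γ) : ddist R x x = 0 :=
  Nat.le_zero.mp (ddist_le (rfl : dWalk R 0 x x))

theorem ddist_le_one {x y : Γ} (h : R x y) : ddist R x y ≤ 1 :=
  ddist_le (dWalk.of_rel h)

theorem dWalk_ddist (hconn : ∀ x y : Γ, ∃ a, dWalk R a x y) (x y : Γ) :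
    dWalk R (ddist R x y) x y :=
  Nat.sInf_mem (hconn x y)

theorem ddist_triangle (hconn : ∀ x y : Γ, ∃ a, dWalk R a x y) (x y z : Γ) :
    ddist R x z ≤ ddist R x y + ddist R y z :=
  ddist_le ((dWalk_ddist hconn x y).append (dWalk_ddist hconn y z))

theorem ddist_comm (hconn : ∀ x y : Γ, ∃ a, dWalk R a x y) (hR : ∀ x y, R x y → R y x)
    (x y : Γ) : ddist R x y = ddist R y x :=
  le_antisymm (ddist_le ((dWalk_ddist hconn y x).symm hR))
    (ddist_le ((dWalk_ddist hconn x y).symm hR))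

theorem ddist_smul_smul {H : Type*} [Group H] [MulAction H Γ]
    (hconn : ∀ x y : Γ, ∃ a, dWalk R a x y) (hR : ∀ (g : H) x y, R (g • x) (g • y) ↔ R x y)
    (g : H) (x y : Γ) : ddist R (g • x) (g • y) = ddist R x y := by
  refine le_antisymm (ddist_le ((dWalk_ddist hconn x y).map_s15 fun x y h => (hR g x y).2 h)) ?_
  have h := (dWalk_ddist hconn (g • x) (g • y)).map_s15 fun x y h => (hR g⁻¹ x y).2 h
  simpa only [inv_smul_smul] using ddist_le h

end ddist

section WL

variable {Γ : Type u} {C : Type v} {c : Γ → Γ → C}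

theorem WLiter_eq_of_succ_eq_s15 {k : ℕ} {x y x' y' : Γ}
    (h : WLiter c (k + 1) x y = WLiter c (k + 1) x' y') : WLiter c k x y = WLiter c k x' y' :=
  congrArg Prod.fst h

theorem WLiter_succ_eq_of_perm_s15 {k : ℕ} {x y x' y' : Γ} (h : WLiter c k x y = WLiter c k x' y')
    (τ : Equiv.Perm Γ) (h₁ : ∀ w, WLiter c k x' (τ w) = WLiter c k x w)
    (h₂ : ∀ w, WLiter c k (τ w) y' = WLiter c k w y) :
    WLiter c (k + 1) x y = WLiter c (k + 1) x' y' :=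
  Prod.ext h <| funext₂ fun _ _ => Nat.card_congr <| τ.subtypeEquiv fun w => by rw [h₁, h₂]

theorem exists_WLiter_eq_of_succ_eq_s15 [Finite Γ] {k : ℕ} {x y x' y' : Γ}
    (h : WLiter c (k + 1) x y = WLiter c (k + 1) x' y') (w : Γ) :
    ∃ w', WLiter c k x' w' = WLiter c k x w ∧ WLiter c k w' y' = WLiter c k w y := by
  have hpos : 0 < (WLiter c (k + 1) x y).2 (WLiter c k x w) (WLiter c k w y) :=
    Finite.card_pos_iff.2 ⟨⟨w, rfl, rfl⟩⟩
  rw [h] at hpos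
  obtain ⟨⟨w', hw'⟩⟩ := Finite.card_pos_iff.1 hpos
  exact ⟨w', hw'⟩

theorem WLiter_smul_smul {H : Type*} [Group H] [MulAction H Γ]
    (hc : ∀ (g : H) x y, c (g • x) (g • y) = c x y) (g : H) (k : ℕ) (x y : Γ) :
    WLiter c k (g • x) (g • y) = WLiter c k x y := by
  induction k generalizing x y with
  | zero => exact hc g x y
  | succ k ih =>
    exact (WLiter_succ_eq_of_perm_s15 (ih x y).symm (MulAction.toPerm g) (fun w => ih x w)
      (fun w => ih w y)).symm

variable (c) in
def WLStableAt (k : ℕ) : Prop :=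
  ∀ v₁ v₂ u₁ u₂ : Γ,
    WLiter c (k + 1) v₁ v₂ = WLiter c (k + 1) u₁ u₂ ↔ WLiter c k v₁ v₂ = WLiter c k u₁ u₂

theorem WLStableAt.succ {k : ℕ} (H : WLStableAt c k) : WLStableAt c (k + 1) := by
  intro v₁ v₂ u₁ u₂
  refine ⟨WLiter_eq_of_succ_eq_s15, fun h => Prod.ext h (funext₂ fun c₁ c₂ => ?_)⟩
  show Nat.card {w // WLiter c (k + 1) v₁ w = c₁ ∧ WLiter c (k + 1) w v₂ = c₂} =
    Nat.card {w // WLiter c (k + 1) u₁ w = c₁ ∧ WLiter c (k + 1) w u₂ = c₂}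
  by_cases hc : (∃ p₁ p₂, WLiter c (k + 1) p₁ p₂ = c₁) ∧ ∃ q₁ q₂, WLiter c (k + 1) q₁ q₂ = c₂
  · -- stability turns the level-`k+1` conditions into level-`k` ones, counted by `h`
    obtain ⟨⟨p₁, p₂, rfl⟩, q₁, q₂, rfl⟩ := hc
    unfold WLStableAt at H
    simp only [H]
    exact congrFun₂ (congrArg Prod.snd h) _ _
  · have hempty (s t : Γ) :
        IsEmpty {w // WLiter c (k + 1) s w = c₁ ∧ WLiter c (k + 1) w t = c₂} :=
      ⟨fun ⟨w, h₁, h₂⟩ => hc ⟨⟨s, w, h₁⟩, w, t, h₂⟩⟩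
    rw [@Nat.card_of_isEmpty _ (hempty v₁ v₂), @Nat.card_of_isEmpty _ (hempty u₁ u₂)]

theorem exists_WLStableAt [Finite Γ] : ∃ k, WLStableAt c k := by
  let E (k : ℕ) : Set ((Γ × Γ) × (Γ × Γ)) :=
    {P | WLiter c k P.1.1 P.1.2 = WLiter c k P.2.1 P.2.2}
  have hE : Antitone E := antitone_nat_of_succ_le fun k _ hP => WLiter_eq_of_succ_eq_s15 hP
  obtain ⟨k, hk⟩ := WellFoundedLT.antitone_chain_condition hE
  refine ⟨k, fun v₁ v₂ u₁ u₂ => ⟨WLiter_eq_of_succ_eq_s15, fun h => ?_⟩⟩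
  have hmem : ((v₁, v₂), (u₁, u₂)) ∈ E (k + 1) := hk (k + 1) k.le_succ ▸ h
  exact hmem

theorem WLStableAt_WLnum [Finite Γ] : WLStableAt c (WLnum c) :=
  Nat.sInf_mem exists_WLStableAt

theorem WLStableAt.of_le {m j : ℕ} (H : WLStableAt c m) (hmj : m ≤ j) : WLStableAt c j :=
  Nat.le_induction H (fun _ _ => WLStableAt.succ) j hmj

theorem WLStableAt.WLiter_eq {m j : ℕ} (H : WLStableAt c m) (hmj : m ≤ j) {x y x' y' : Γ}
    (h : WLiter c m x y = WLiter c m x' y') : WLiter c j x y = WLiter c j x' y' := by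
  induction j, hmj using Nat.le_induction with
  | base => exact h
  | succ j hmj ih => exact (H.of_le hmj x y x' y').2 ih

theorem eq_of_WLiter_eq_of_dWalk [Finite Γ] {R : Γ → Γ → Prop}
    (hfun : ∀ x y, R x y → NonemptyColor c (c x y)) {k L : ℕ} {x y y' : Γ} (hL : 0 < L)
    (hLk : L ≤ 2 ^ k) (hw : dWalk R L x y) (h : WLiter c k x y = WLiter c k x y') : y = y' := by
  induction k generalizing L x y y' with
  | zero =>
    obtain rfl : L = 1 := by simp at hLk; omega
    obtain ⟨u, hxu, rfl⟩ := hw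
    exact hfun x u hxu x u y' rfl h.symm
  | succ k ih =>
    by_cases hLk' : L ≤ 2 ^ k
    · exact ih hL hLk' hw (WLiter_eq_of_succ_eq_s15 h)
    obtain ⟨m, hxm, hmy⟩ :=
      dWalk.split (a := 2 ^ k) (b := L - 2 ^ k) (by rwa [Nat.add_sub_cancel' (by omega)])
    obtain ⟨m', hm₁, hm₂⟩ := exists_WLiter_eq_of_succ_eq_s15 h m
    obtain rfl : m = m' := ih (Nat.two_pow_pos k) le_rfl hxm hm₁.symm
    exact ih (by omega) (by rw [pow_succ] at hLk; omega) hmy hm₂.symm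

end WL

section Orbit

variable {Γ : Type u} {C : Type v} {c : Γ → Γ → C} {c₀ : C} {R : Γ → Γ → Prop}
  {H : Type*} [Group H] [MulAction H Γ]

/-- The permutation acting by `a` on the vertices near the orbit of `y` and fixing the others
matches the witnesses counted by the colours of `(x, y)` and `(x, a • y)`. -/
theorem WLiter_eq_smul_of_lt_ddist (hconn : ∀ x y : Γ, ∃ a, dWalk R a x y)
    (hRc : ∀ x y, R x y ↔ c x y ≠ c₀) (hc : ∀ (g : H) x y, c (g • x) (g • y) = c x y)
    {k : ℕ} {x y : Γ} (hfar : ∀ g : H, 2 ^ k < ddist R x (g • y)) (a : H) :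
    WLiter c k x y = WLiter c k x (a • y) := by
  have hR (g : H) (x y : Γ) : R (g • x) (g • y) ↔ R x y := by rw [hRc, hRc, hc]
  induction k generalizing x y with
  | zero =>
    have hfar' (g : H) : c x (g • y) = c₀ := by
      by_contra hne
      exact (ddist_le_one ((hRc _ _).2 hne)).not_gt (by simpa using hfar g)
    have h := (hfar' 1).trans (hfar' a).symm
    rwa [one_smul] at h
  | succ k ih =>
    classical
    let near (w : Γ) : Prop := ∃ g : H, ddist R w (g • y) ≤ 2 ^ k
    have near_smul (b : H) {w : Γ} (hw : near w) : near (b • w) := by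
      obtain ⟨g, hg⟩ := hw
      exact ⟨b * g, by rwa [mul_smul, ddist_smul_smul hconn hR]⟩
    have hnear (w : Γ) : near (a • w) ↔ near w :=
      ⟨fun hw => by simpa using near_smul a⁻¹ hw, near_smul a⟩
    let τ : Equiv.Perm Γ := Equiv.Perm.ofSubtype ((MulAction.toPerm a).subtypePerm hnear)
    have hτ_near {w : Γ} (hw : near w) : τ w = a • w := by
      rw [Equiv.Perm.ofSubtype_apply_of_mem _ hw]
      rfl
    have hτ_far {w : Γ} (hw : ¬near w) : τ w = w := Equiv.Perm.ofSubtype_apply_of_not_mem _ hw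
    have hk : 2 ^ k < 2 ^ (k + 1) := Nat.pow_lt_pow_right one_lt_two k.lt_succ_self
    refine WLiter_succ_eq_of_perm_s15 (ih (fun g => hk.trans (hfar g))) τ (fun w => ?_) (fun w => ?_)
    · by_cases hw : near w
      · obtain ⟨g, hg⟩ := hw
        rw [hτ_near ⟨g, hg⟩]
        refine (ih (fun b => ?_)).symm
        have := ddist_triangle hconn x (b • w) ((b * g) • y)
        rw [mul_smul, ddist_smul_smul hconn hR] at this
        have := hfar (b * g)
        rw [pow_succ, mul_smul] at this
        omega
      · rw [hτ_far hw]
    · by_cases hw : near w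
      · rw [hτ_near hw, WLiter_smul_smul hc]
      · rw [hτ_far hw]
        exact (ih fun g => not_le.1 fun h => hw ⟨g, h⟩).symm

theorem exists_ddist_smul_le_two_pow_WLnum [Finite Γ] (hconn : ∀ x y : Γ, ∃ a, dWalk R a x y)
    (hRc : ∀ x y, R x y ↔ c x y ≠ c₀) (hc : ∀ (g : H) x y, c (g • x) (g • y) = c x y)
    (hfun : ∀ x y, R x y → NonemptyColor c (c x y)) (hmove : ∀ y : Γ, ∃ g : H, g • y ≠ y)
    (x y : Γ) : ∃ g : H, ddist R x (g • y) ≤ 2 ^ WLnum c := by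
  by_contra! hfar
  obtain ⟨g, hg⟩ := hmove y
  have hL : 2 ^ WLnum c < ddist R x y := by simpa using hfar 1
  have hLm : ddist R x y ≤ 2 ^ (WLnum c + ddist R x y) :=
    Nat.lt_two_pow_self.le.trans (Nat.pow_le_pow_right two_pos (Nat.le_add_left _ _))
  have heq := WLStableAt_WLnum.WLiter_eq (Nat.le_add_right _ (ddist R x y))
    (WLiter_eq_smul_of_lt_ddist hconn hRc hc hfar g)
  exact hg (eq_of_WLiter_eq_of_dWalk hfun (Nat.zero_lt_of_lt hL) hLm (dWalk_ddist hconn x y)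
    heq).symm

end Orbit

section OrbitDistance

variable {Γ : Type u} {R : Γ → Γ → Prop} {H : Type*} [Group H] [MulAction H Γ]

theorem ddist_pow_smul_le (hconn : ∀ x y : Γ, ∃ a, dWalk R a x y)
    (hR : ∀ (g : H) x y, R (g • x) (g • y) ↔ R x y) (g : H) (y : Γ) (i : ℕ) :
    ddist R y ((g ^ i) • y) ≤ i * ddist R y (g • y) := by
  induction i with
  | zero => simp [ddist_self]
  | succ i ih =>
    calc ddist R y ((g ^ (i + 1)) • y)
        ≤ ddist R y ((g ^ i) • y) + ddist R ((g ^ i) • y) ((g ^ i) • g • y) := by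
          rw [pow_succ, mul_smul]
          exact ddist_triangle hconn _ _ _
      _ ≤ (i + 1) * ddist R y (g • y) := by
          rw [ddist_smul_smul hconn hR, add_one_mul]
          exact Nat.add_le_add_right ih _

theorem ddist_smul_le_of_prime_card {P : ℕ} [Fact P.Prime] (hP : Nat.card H = P)
    (hconn : ∀ x y : Γ, ∃ a, dWalk R a x y) (hR : ∀ (g : H) x y, R (g • x) (g • y) ↔ R x y)
    {g : H} {y : Γ} (hg : g • y ≠ y) (h : H) :
    ddist R y (h • y) ≤ (P - 1) * ddist R y (g • y) := by
  classical
  have hg1 : g ≠ 1 := by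
    rintro rfl
    exact hg (one_smul H y)
  have : Finite H := Nat.finite_of_card_ne_zero (hP ▸ (Fact.out : P.Prime).ne_zero)
  have horder : orderOf g = P := orderOf_eq_prime (hP ▸ pow_card_eq_one') hg1
  obtain ⟨i, hi, rfl⟩ : ∃ i < orderOf g, g ^ i = h := by
    simpa using mem_powers_iff_mem_range_orderOf.1 (mem_powers_of_prime_card hP hg1)
  exact (ddist_pow_smul_le hconn hR g y i).trans (Nat.mul_le_mul_right _ (by omega))

theorem ddist_le_of_forall_far {E : ℕ} (hconn : ∀ x y : Γ, ∃ a, dWalk R a x y)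
    (hsymm : ∀ x y, R x y → R y x) {y : Γ} (hnear : ∀ x, ∃ g : H, ddist R x (g • y) ≤ E)
    (hfar : ∀ g : H, g • y ≠ y → 2 * E + 1 < ddist R y (g • y)) (x : Γ) : ddist R x y ≤ E := by
  -- the orbit point near `v` is within `2 * E + 1` of `y`, so it is `y` itself
  have hstep {u v : Γ} (hu : ddist R u y ≤ E) (huv : R u v) : ddist R v y ≤ E := by
    obtain ⟨g, hg⟩ := hnear v
    by_cases hgy : g • y = y
    · rwa [hgy] at hg
    have := hfar g hgy
    have := ddist_triangle hconn y u (g • y)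
    have := ddist_triangle hconn u v (g • y)
    have := ddist_le_one huv
    rw [ddist_comm hconn hsymm y u] at *
    omega
  have hwalk (L : ℕ) : ∀ u, ddist R u y ≤ E → dWalk R L u x → ddist R x y ≤ E := by
    induction L with
    | zero => rintro u hu rfl; exact hu
    | succ L ih => rintro u hu ⟨v, huv, hv⟩; exact ih v (hstep hu huv) hv
  exact hwalk _ y (by rw [ddist_self]; exact Nat.zero_le E) (dWalk_ddist hconn y x)

theorem ddist_le_of_near_orbit {P : ℕ} [Fact P.Prime] (hP : Nat.card H = P) {E : ℕ}
    (hconn : ∀ x y : Γ, ∃ a, dWalk R a x y) (hsymm : ∀ x y, R x y → R y x)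
    (hR : ∀ (g : H) x y, R (g • x) (g • y) ↔ R x y)
    (hnear : ∀ x y, ∃ g : H, ddist R x (g • y) ≤ E) (x y : Γ) :
    ddist R x y ≤ E + (P - 1) * (2 * E + 1) := by
  by_cases hclose : ∃ g : H, g • y ≠ y ∧ ddist R y (g • y) ≤ 2 * E + 1
  · obtain ⟨g, hgy, hg⟩ := hclose
    obtain ⟨h, hh⟩ := hnear x y
    have hhy : ddist R (h • y) y ≤ (P - 1) * (2 * E + 1) :=
      calc ddist R (h • y) y = ddist R y (h⁻¹ • y) := by
            rw [← ddist_smul_smul hconn hR h⁻¹, inv_smul_smul]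
        _ ≤ (P - 1) * ddist R y (g • y) := ddist_smul_le_of_prime_card hP hconn hR hgy h⁻¹
        _ ≤ (P - 1) * (2 * E + 1) := Nat.mul_le_mul_left _ hg
    have := ddist_triangle hconn x (h • y) y
    omega
  · push Not at hclose
    exact (ddist_le_of_forall_far hconn hsymm (hnear · y) hclose x).trans (Nat.le_add_right _ _)

end OrbitDistance

theorem ddiam_le_of_prime_card {Γ : Type u} {C : Type v} [Finite Γ] {c : Γ → Γ → C} {c₀ : C}
    {R : Γ → Γ → Prop} {H : Type*} [Group H] [MulAction H Γ] {P : ℕ} [Fact P.Prime]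
    (hP : Nat.card H = P) (hconn : ∀ x y : Γ, ∃ a, dWalk R a x y)
    (hsymm : ∀ x y, R x y → R y x) (hRc : ∀ x y, R x y ↔ c x y ≠ c₀)
    (hc : ∀ (g : H) x y, c (g • x) (g • y) = c x y)
    (hfun : ∀ x y, R x y → NonemptyColor c (c x y)) (hmove : ∀ y : Γ, ∃ g : H, g • y ≠ y) :
    ddiam R ≤ (P - 1) * 2 ^ (WLnum c + 2) := by
  have hR (g : H) (x y : Γ) : R (g • x) (g • y) ↔ R x y := by rw [hRc, hRc, hc]
  refine csSup_le' ?_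
  rintro _ ⟨⟨x, y⟩, rfl⟩
  have hxy := ddist_le_of_near_orbit hP hconn hsymm hR
    (exists_ddist_smul_le_two_pow_WLnum hconn hRc hc hfun hmove) x y
  have hP1 : 1 ≤ P - 1 := by have := (Fact.out : P.Prime).two_le; omega
  have hE : 1 ≤ 2 ^ WLnum c := Nat.one_le_two_pow
  calc ddist R x y ≤ 2 ^ WLnum c + (P - 1) * (2 * 2 ^ WLnum c + 1) := hxy
    _ ≤ (P - 1) * (4 * 2 ^ WLnum c) := by
        nlinarith [Nat.le_mul_of_pos_left (2 ^ WLnum c) hP1, Nat.le_mul_of_pos_right (P - 1) hE]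
    _ = (P - 1) * 2 ^ (WLnum c + 2) := by ring

section Schreier

variable {G Γ : Type*} [Group G] [MulAction G Γ]

def schreierColor (S : Set G) (v w : Γ) : Set G := {A ∈ S | A • v = w}

theorem nonemptyColor_schreierColor {S : Set G} {v w : Γ} (h : (schreierColor S v w).Nonempty) :
    NonemptyColor (schreierColor S : Γ → Γ → Set G) (schreierColor S v w) := by
  obtain ⟨A, hA⟩ := h
  intro x u u' hu hu'
  have hu₁ : A ∈ schreierColor S x u := hu ▸ hA
  have hu₂ : A ∈ schreierColor S x u' := hu' ▸ hA
  exact hu₁.2.symm.trans hu₂.2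

theorem schreierColor_smul_smul {H : Type*} [Group H] [MulAction H Γ] [SMulCommClass G H Γ]
    (S : Set G) (h : H) (v w : Γ) : schreierColor S (h • v) (h • w) = schreierColor S v w := by
  ext A
  simp [schreierColor, smul_comm A h v]

theorem schreierColor_nonempty_comm {S : Set G} (hinv : S⁻¹ = S) {v w : Γ}
    (h : (schreierColor S v w).Nonempty) : (schreierColor S w v).Nonempty := by
  obtain ⟨A, hA, rfl⟩ := h
  exact ⟨A⁻¹, hinv ▸ Set.inv_mem_inv.2 hA, inv_smul_smul A v⟩

theorem exists_dWalk_schreierColor [MulAction.IsPretransitive G Γ] {S : Set G}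
    (hinv : S⁻¹ = S) (hgen : Subgroup.closure S = ⊤) (x y : Γ) :
    ∃ L, dWalk (fun v w => (schreierColor S v w).Nonempty) L x y := by
  obtain ⟨g, rfl⟩ := MulAction.exists_smul_eq G x y
  have hg : g ∈ Subgroup.closure S := hgen ▸ Subgroup.mem_top g
  induction hg using Subgroup.closure_induction generalizing x with
  | mem A hA => exact ⟨1, dWalk.of_rel ⟨A, hA, rfl⟩⟩
  | one => exact ⟨0, (one_smul G x).symm⟩
  | mul g h _ _ ihg ihh =>
    obtain ⟨a, ha⟩ := ihh x
    obtain ⟨b, hb⟩ := ihg (h • x)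
    exact ⟨a + b, mul_smul g h x ▸ ha.append hb⟩
  | inv g _ ih =>
    obtain ⟨a, ha⟩ := ih (g⁻¹ • x)
    rw [smul_inv_smul] at ha
    exact ⟨a, ha.symm fun _ _ => schreierColor_nonempty_comm hinv⟩

end Schreier

theorem LinearIndependent.exists_extend_fin {F V : Type*} [Field F] [AddCommGroup V] [Module F V]
    [FiniteDimensional F V] {k : ℕ} {x : Fin k → V} (hx : LinearIndependent F x) {n : ℕ}
    (hkn : k ≤ n) (hn : n ≤ Module.finrank F V) :
    ∃ b : Fin n → V, LinearIndependent F b ∧ ∀ i, b (Fin.castLE hkn i) = x i := by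
  induction n, hkn using Nat.le_induction with
  | base => exact ⟨x, hx, fun i => rfl⟩
  | succ n hkn ih =>
    obtain ⟨b, hb, hbx⟩ := ih (by omega)
    obtain ⟨v, hv⟩ := exists_linearIndependent_snoc_of_lt_finrank hb (by omega)
    exact ⟨Fin.snoc b v, hv, fun i => (Fin.snoc_castSucc (α := fun _ => V) ..).trans (hbx i)⟩

namespace IndepTuples

variable {F : Type*} [Field F] {n k : ℕ}

instance [Finite F] : Finite (IndepTuples F n k) :=
  inferInstanceAs (Finite {v : Fin k → Fin n → F // LinearIndependent F v})

instance {G : Type*} [Group G] [DistribMulAction G (Fin n → F)]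
    [SMulCommClass G F (Fin n → F)] : MulAction G (IndepTuples F n k) where
  smul g v := ⟨fun i => g • v.1 i,
    v.2.map' (DistribMulAction.toLinearEquiv F (Fin n → F) g).toLinearMap (LinearEquiv.ker _)⟩
  one_smul v := Subtype.ext <| funext fun i => one_smul G (v.1 i)
  mul_smul g h v := Subtype.ext <| funext fun i => mul_smul g h (v.1 i)

instance {G H : Type*} [Group G] [DistribMulAction G (Fin n → F)]
    [SMulCommClass G F (Fin n → F)] [Group H] [DistribMulAction H (Fin n → F)]
    [SMulCommClass H F (Fin n → F)] [SMulCommClass G H (Fin n → F)] :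
    SMulCommClass G H (IndepTuples F n k) :=
  ⟨fun g h v => Subtype.ext <| funext fun i => smul_comm g h (v.1 i)⟩

theorem smul_eq_iff_mulVec {A : Matrix.SpecialLinearGroup (Fin n) F} {v w : IndepTuples F n k} :
    A • v = w ↔ ∀ i, (A : Matrix (Fin n) (Fin n) F).mulVec (v.1 i) = w.1 i :=
  Subtype.ext_iff.trans funext_iff

theorem units_smul_ne (hk : 0 < k) {t : Fˣ} (ht : t ≠ 1) (v : IndepTuples F n k) : t • v ≠ v := by
  intro h
  have h₀ : (t : F) • v.1 ⟨0, hk⟩ = (1 : F) • v.1 ⟨0, hk⟩ := by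
    rw [one_smul]
    exact congrFun (congrArg Subtype.val h) ⟨0, hk⟩
  exact ht (Units.val_eq_one.1 (smul_left_injective F (v.2.ne_zero ⟨0, hk⟩) h₀))

variable (F) in
noncomputable def basisFun (hkn : k ≤ n) : IndepTuples F n k :=
  ⟨Pi.basisFun F (Fin n) ∘ Fin.castLE hkn,
    (Pi.basisFun F (Fin n)).linearIndependent.comp _ (Fin.castLE_injective hkn)⟩

theorem exists_smul_std_eq (hkn : k < n) (x : IndepTuples F n k) :
    ∃ A : Matrix.SpecialLinearGroup (Fin n) F, A • basisFun F hkn.le = x := by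
  obtain ⟨b, hb, hbx⟩ :=
    x.2.exists_extend_fin hkn.le (Module.finrank_fin_fun F).ge
  let M : Matrix (Fin n) (Fin n) F := (Matrix.of b).transpose
  have hM : M.det ≠ 0 := by
    rw [Matrix.det_transpose, ← isUnit_iff_ne_zero, ← Matrix.isUnit_iff_isUnit_det]
    exact Matrix.linearIndependent_rows_iff_isUnit.1 hb
  -- rescale the last column, which is not one of the `x i`, to get determinant one
  let j₀ : Fin n := ⟨n - 1, by omega⟩
  refine ⟨⟨M.updateCol j₀ (M.det⁻¹ • fun r => M r j₀), ?_⟩, ?_⟩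
  · rw [Matrix.det_updateCol_smul, Matrix.updateCol_eq_self, inv_mul_cancel₀ hM]
  · refine Subtype.ext (funext fun i => funext fun r => ?_)
    have hi : Fin.castLE hkn.le i ≠ j₀ := Fin.ne_of_val_ne (by simp [j₀]; omega)
    show (M.updateCol j₀ _).mulVec (Pi.basisFun F (Fin n) (Fin.castLE hkn.le i)) r = x.1 i r
    rw [Pi.basisFun_apply, Matrix.mulVec_single_one, Matrix.col_apply, Matrix.updateCol_ne hi,
      ← hbx]
    rfl

theorem isPretransitive (hkn : k < n) :
    MulAction.IsPretransitive (Matrix.SpecialLinearGroup (Fin n) F) (IndepTuples F n k) :=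
  MulAction.IsPretransitive.of_orbit (exists_smul_std_eq hkn)

end IndepTuples

theorem Real.logb_two_le_of_le_sub_one_mul_two_pow {D P m : ℕ} (hP : 2 ≤ P)
    (hD : D ≤ (P - 1) * 2 ^ m) : Real.logb 2 D ≤ Real.logb 2 ((P : ℝ) - 1) + m := by
  have hP₁ : (1 : ℝ) ≤ P - 1 := by
    rw [le_sub_iff_add_le]
    exact_mod_cast hP
  have hD' : (D : ℝ) ≤ (P - 1) * 2 ^ m := by
    have := (Nat.cast_le (α := ℝ)).2 hD
    rwa [Nat.cast_mul, Nat.cast_sub (by omega), Nat.cast_pow, Nat.cast_one, Nat.cast_two] at this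
  rcases D.eq_zero_or_pos with rfl | hD₀
  · simpa using add_nonneg (Real.logb_nonneg one_lt_two hP₁) m.cast_nonneg
  calc Real.logb 2 D ≤ Real.logb 2 ((P - 1) * 2 ^ m) :=
        Real.logb_le_logb_of_le one_lt_two (by exact_mod_cast hD₀) hD'
    _ = Real.logb 2 ((P : ℝ) - 1) + m := by
        rw [Real.logb_mul (by positivity) (by positivity), Real.logb_pow,
          Real.logb_self_eq_one one_lt_two, mul_one]

theorem WL_lower_bound_SL_general {F : Type*} [Field F] [Fintype F]
    {n k : ℕ} (hk : 0 < k) (hkn : k < n)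
    (S : Set (Matrix.SpecialLinearGroup (Fin n) F))
    (hinv : S⁻¹ = S)
    (hgen : Subgroup.closure S = ⊤)
    (c : IndepTuples F n k → IndepTuples F n k →
      Set (Matrix.SpecialLinearGroup (Fin n) F))
    (hc : ∀ v w : IndepTuples F n k,
      c v w = {A ∈ S | ∀ i : Fin k,
        (A : Matrix (Fin n) (Fin n) F).mulVec (v.val i) = w.val i})
    (R : IndepTuples F n k → IndepTuples F n k → Prop)
    (hR : ∀ v w : IndepTuples F n k, R v w ↔ ∃ A ∈ S, ∀ i : Fin k,
      (A : Matrix (Fin n) (Fin n) F).mulVec (v.val i) = w.val i)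
    (p : ℕ) (hp : p.Prime) (hpq : p ∣ Fintype.card F - 1) :
    Real.logb 2 (ddiam R) - Real.logb 2 ((p : ℝ) - 1) - 3 ≤ (WLnum c : ℝ) := by
  obtain rfl : c = schreierColor S := funext₂ fun v w => by
    simp only [hc, schreierColor, IndepTuples.smul_eq_iff_mulVec]
  obtain rfl : R = fun v w => (schreierColor S v w).Nonempty := funext₂ fun v w => by
    simp only [hR, schreierColor, IndepTuples.smul_eq_iff_mulVec]
    rfl
  have := Fact.mk hp
  have := IndepTuples.isPretransitive (F := F) hkn
  classical
  obtain ⟨u, hu⟩ := exists_prime_orderOf_dvd_card p (by rwa [Fintype.card_units (α := F)])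
  have hu₁ : u ≠ 1 := by
    rintro rfl
    exact hp.one_lt.ne' (hu ▸ orderOf_one)
  have hmove (v : IndepTuples F n k) : ∃ g : Subgroup.zpowers u, g • v ≠ v :=
    ⟨⟨u, Subgroup.mem_zpowers u⟩, IndepTuples.units_smul_ne hk hu₁ v⟩
  have hdiam := ddiam_le_of_prime_card ((Nat.card_zpowers u).trans hu)
    (exists_dWalk_schreierColor hinv hgen) (fun _ _ => schreierColor_nonempty_comm hinv)
    (fun _ _ => Set.nonempty_iff_ne_empty) (fun g => schreierColor_smul_smul S g)
    (fun _ _ => nonemptyColor_schreierColor) hmove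
  have hlog := Real.logb_two_le_of_le_sub_one_mul_two_pow hp.two_le hdiam
  push_cast at hlog
  linarith

/-- Lower bound for the Schreier configuration of `SL_n(F_q)` (`q > 2`) acting on
linearly independent `k`-tuples: if `p` is the smallest prime dividing `q − 1`, then
`WL(𝔛_S) ≥ log₂ (diam Sch(V,S)) − log₂(p − 1) − 3`. -/
theorem WL_lower_bound_SL {F : Type*} [Field F] [Fintype F]
    (hq : 2 < Fintype.card F) {n k : ℕ} (hk : 0 < k) (hkn : k < n)
    (S : Set (Matrix.SpecialLinearGroup (Fin n) F))
    (hI : (1 : Matrix.SpecialLinearGroup (Fin n) F) ∈ S) (hinv : S⁻¹ = S)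
    (hgen : Subgroup.closure S = ⊤)
    (c : IndepTuples F n k → IndepTuples F n k →
      Set (Matrix.SpecialLinearGroup (Fin n) F))
    (hc : ∀ v w : IndepTuples F n k,
      c v w = {A ∈ S | ∀ i : Fin k,
        (A : Matrix (Fin n) (Fin n) F).mulVec (v.val i) = w.val i})
    (R : IndepTuples F n k → IndepTuples F n k → Prop)
    (hR : ∀ v w : IndepTuples F n k, R v w ↔ ∃ A ∈ S, ∀ i : Fin k,
      (A : Matrix (Fin n) (Fin n) F).mulVec (v.val i) = w.val i)
    (p : ℕ) (hp : p.Prime) (hpq : p ∣ Fintype.card F - 1)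
    (hmin : ∀ p' : ℕ, p'.Prime → p' ∣ Fintype.card F - 1 → p ≤ p') :
    Real.logb 2 (ddiam R) - Real.logb 2 ((p : ℝ) - 1) - 3 ≤ (WLnum c : ℝ) :=
  WL_lower_bound_SL_general hk hkn S hinv hgen c hc R hR p hp hpq
end

section
/- Let 𝔛_C be the Cayley configuration of Cay(G,S). For any four vertices g, h, g', h' ∈ G and any integer k ≥ 0 such that d(g,h) > 2^k and d(g',h') > 2^k (distances in Cay(G,S)), the Weisfeiler–Leman colours satisfy c^{(k)}(g,h) = c^{(k)}(g',h'). -/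
universe u v

section AuxWL

lemma dWalk_trans' {Γ : Type u} {R : Γ → Γ → Prop} :
    ∀ {m : ℕ} {x w : Γ} (n : ℕ) (y : Γ),
    dWalk R m x w → dWalk R n w y → dWalk R (m + n) x y
  | 0, x, w, n, y, h1, h2 => by
      rw [show x = w from h1]; simpa using h2
  | m + 1, x, w, n, y, ⟨u, hu, hw⟩, h2 =>
      Nat.succ_add m n ▸ ⟨u, hu, dWalk_trans' n y hw h2⟩

lemma dWalk_split' {Γ : Type u} {R : Γ → Γ → Prop} :
    ∀ (j : ℕ) {m : ℕ} {x y : Γ}, j ≤ m → dWalk R m x y →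
    ∃ w, dWalk R j x w ∧ dWalk R (m - j) w y
  | 0, m, x, y, _, h => ⟨x, rfl, h⟩
  | j + 1, m, x, y, hj, h => by
      obtain ⟨m', rfl⟩ : ∃ m', m = m' + 1 := ⟨m - 1, by omega⟩
      obtain ⟨u, hu, hw⟩ := h
      obtain ⟨w, hw1, hw2⟩ := dWalk_split' j (by omega) hw
      exact ⟨w, ⟨u, hu, hw1⟩, by simpa [Nat.succ_sub_succ] using hw2⟩

lemma card_split' {α : Type*} [Finite α] {P Q : α → Prop} (h : ∀ a, P a ∨ Q a) :
    Nat.card {a // P a ∧ Q a} + (Nat.card {a // ¬ P a} + Nat.card {a // ¬ Q a})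
      = Nat.card α := by
  classical
  have hdisj : Disjoint (fun a => ¬ P a) (fun a => ¬ Q a) := by
    rw [Pi.disjoint_iff]
    intro a
    rw [Prop.disjoint_iff]
    rcases h a with h' | h' <;> tauto
  have e1 : Nat.card {a // ¬ P a} + Nat.card {a // ¬ Q a}
      = Nat.card {a // ¬ P a ∨ ¬ Q a} := by
    rw [← Nat.card_sum]
    exact (Nat.card_congr (subtypeOrEquiv _ _ hdisj)).symm
  have e2 : Nat.card {a // ¬ P a ∨ ¬ Q a} = Nat.card {a // ¬ (P a ∧ Q a)} :=
    Nat.card_congr (Equiv.subtypeEquivRight fun a => by tauto)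
  have e3 : Nat.card {a // P a ∧ Q a} + Nat.card {a // ¬ (P a ∧ Q a)} = Nat.card α := by
    rw [← Nat.card_sum]
    exact Nat.card_congr (Equiv.sumCompl _)
  omega

lemma WLiter_transl {G : Type u} [Group G] (c : G → G → Option G)
    (hc : ∀ x y t : G, c (x * t) (y * t) = c x y) :
    ∀ (k : ℕ) (x y t : G), WLiter c k (x * t) (y * t) = WLiter c k x y
  | 0, x, y, t => hc x y t
  | k + 1, x, y, t => by
      simp only [WLiter]
      refine Prod.ext (WLiter_transl c hc k x y t) ?_
      funext c₁ c₂
      refine Nat.card_congr ((Equiv.mulRight t⁻¹).subtypeEquiv fun w => ?_)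
      simp only [Equiv.coe_mulRight]
      have e1 := WLiter_transl c hc k x (w * t⁻¹) t
      have e2 := WLiter_transl c hc k (w * t⁻¹) y t
      rw [inv_mul_cancel_right] at e1 e2
      rw [← e1, ← e2]

end AuxWL

section MainWL

variable {G : Type u} [Group G] [Finite G]

lemma WL_far_main (S : Set G) (he : (1 : G) ∈ S)
    (c : G → G → Option G)
    (hc1 : ∀ g₁ g₂ : G, g₂ * g₁⁻¹ ∈ S → c g₁ g₂ = some (g₂ * g₁⁻¹))
    (hc2 : ∀ g₁ g₂ : G, g₂ * g₁⁻¹ ∉ S → c g₁ g₂ = none)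
    (R : G → G → Prop) (hR : ∀ g h : G, R g h ↔ ∃ s ∈ S, h = s * g) :
    ∀ (k : ℕ) (x y x' y' : G), (∀ m ≤ 2 ^ k, ¬ dWalk R m x y) →
      ((∀ m ≤ 2 ^ k, ¬ dWalk R m x' y') → WLiter c k x y = WLiter c k x' y') ∧
      (¬ (∀ m ≤ 2 ^ k, ¬ dWalk R m x' y') → WLiter c k x y ≠ WLiter c k x' y') := by
  have hct : ∀ x y t : G, c (x * t) (y * t) = c x y := by
    intro x y t
    have hxy : (y * t) * (x * t)⁻¹ = y * x⁻¹ := by group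
    by_cases hS : y * x⁻¹ ∈ S
    · rw [hc1 _ _ hS, hc1 _ _ (by rw [hxy]; exact hS), hxy]
    · rw [hc2 _ _ hS, hc2 _ _ (by rw [hxy]; exact hS)]
  -- the colour of a near pair at level 0 is `some`
  have hnone : ∀ x y : G, (∀ m ≤ 1, ¬ dWalk R m x y) → c x y = none := by
    intro x y hfar
    apply hc2
    intro hS
    refine hfar 1 le_rfl ⟨y, (hR x y).2 ⟨y * x⁻¹, hS, by group⟩, rfl⟩
  have hsome : ∀ x y : G, ¬ (∀ m ≤ 1, ¬ dWalk R m x y) → ∃ s, c x y = some s := by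
    intro x y hnear
    push_neg at hnear
    obtain ⟨m, hm, hw⟩ := hnear
    interval_cases m
    · rw [show x = y from hw]
      exact ⟨1, by rw [hc1 y y (by rw [mul_inv_cancel]; exact he), mul_inv_cancel]⟩
    · obtain ⟨u, hu, hu'⟩ := hw
      obtain rfl : u = y := hu'
      obtain ⟨s, hs, hy⟩ := (hR x u).1 hu
      have hyx : u * x⁻¹ = s := by rw [hy]; group
      exact ⟨u * x⁻¹, hc1 x u (by rw [hyx]; exact hs)⟩
  intro k
  induction k with
  | zero =>
    intro x y x' y' hfar
    constructor
    · intro hfar'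
      show c x y = c x' y'
      rw [hnone x y (by simpa using hfar), hnone x' y' (by simpa using hfar')]
    · intro hnear'
      obtain ⟨s, hs⟩ := hsome x' y' (by simpa using hnear')
      show c x y ≠ c x' y'
      rw [hnone x y (by simpa using hfar), hs]
      simp
  | succ k IH =>
    intro x y x' y' hfar
    have hpow : (2 : ℕ) ^ (k + 1) = 2 ^ k + 2 ^ k := by ring
    have hfarxy : ∀ m ≤ 2 ^ k, ¬ dWalk R m x y := fun m hm => hfar m (by omega)
    have hmid : ∀ x₀ y₀ : G, (∀ m ≤ 2 ^ (k + 1), ¬ dWalk R m x₀ y₀) → ∀ w,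
        (∀ m ≤ 2 ^ k, ¬ dWalk R m x₀ w) ∨ (∀ m ≤ 2 ^ k, ¬ dWalk R m w y₀) := by
      intro x₀ y₀ hf w
      by_contra hcon
      push_neg at hcon
      obtain ⟨⟨m1, hm1, hw1⟩, ⟨m2, hm2, hw2⟩⟩ := hcon
      exact hf (m1 + m2) (by omega) (dWalk_trans' m2 y₀ hw1 hw2)
    have colA : ∀ u v : G, WLiter c k u v = WLiter c k x y ↔
        (∀ m ≤ 2 ^ k, ¬ dWalk R m u v) := by
      intro u v
      constructor
      · intro hcol
        by_contra hnear
        exact (IH x y u v hfarxy).2 hnear hcol.symm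
      · intro hf
        exact ((IH x y u v hfarxy).1 hf).symm
    constructor
    · -- far pairs get equal colours
      intro hfar'
      have hfarxy' : ∀ m ≤ 2 ^ k, ¬ dWalk R m x' y' := fun m hm => hfar' m (by omega)
      have h1 : WLiter c k x y = WLiter c k x' y' := (IH x y x' y' hfarxy).1 hfarxy'
      simp only [WLiter]
      refine Prod.ext h1 ?_
      funext c₁ c₂
      show Nat.card {w : G // WLiter c k x w = c₁ ∧ WLiter c k w y = c₂}
        = Nat.card {w : G // WLiter c k x' w = c₁ ∧ WLiter c k w y' = c₂}
      by_cases e1 : c₁ = WLiter c k x y <;> by_cases e2 : c₂ = WLiter c k x y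
      · -- both colours are the "far" colour
        have hPQ : ∀ w : G, WLiter c k x w = c₁ ∨ WLiter c k w y = c₂ := fun w =>
          (hmid x y hfar w).imp (fun hf => e1 ▸ (colA x w).2 hf)
            (fun hf => e2 ▸ (colA w y).2 hf)
        have hPQ' : ∀ w : G, WLiter c k x' w = c₁ ∨ WLiter c k w y' = c₂ := fun w =>
          (hmid x' y' hfar' w).imp (fun hf => e1 ▸ (colA x' w).2 hf)
            (fun hf => e2 ▸ (colA w y').2 hf)
        have s1 := card_split' hPQ
        have s2 := card_split' hPQ'
        have b1 : Nat.card {w : G // ¬ WLiter c k x w = c₁}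
            = Nat.card {w : G // ¬ WLiter c k x' w = c₁} := by
          refine Nat.card_congr ((Equiv.mulRight (x⁻¹ * x')).subtypeEquiv fun w => ?_)
          simp only [Equiv.coe_mulRight]
          have := WLiter_transl c hct k x w (x⁻¹ * x')
          rw [show x * (x⁻¹ * x') = x' by group] at this
          rw [this]
        have b2 : Nat.card {w : G // ¬ WLiter c k w y = c₂}
            = Nat.card {w : G // ¬ WLiter c k w y' = c₂} := by
          refine Nat.card_congr ((Equiv.mulRight (y⁻¹ * y')).subtypeEquiv fun w => ?_)
          simp only [Equiv.coe_mulRight]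
          have := WLiter_transl c hct k w y (y⁻¹ * y')
          rw [show y * (y⁻¹ * y') = y' by group] at this
          rw [this]
        omega
      · -- c₁ far colour, c₂ not
        have r1 : Nat.card {w : G // WLiter c k x w = c₁ ∧ WLiter c k w y = c₂}
            = Nat.card {w : G // WLiter c k w y = c₂} := by
          refine Nat.card_congr (Equiv.subtypeEquivRight fun w => ?_)
          constructor
          · exact And.right
          · intro h2
            refine ⟨?_, h2⟩
            rcases hmid x y hfar w with hf | hf
            · exact e1 ▸ (colA x w).2 hf
            · exact absurd (h2 ▸ (colA w y).2 hf) e2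
        have r2 : Nat.card {w : G // WLiter c k x' w = c₁ ∧ WLiter c k w y' = c₂}
            = Nat.card {w : G // WLiter c k w y' = c₂} := by
          refine Nat.card_congr (Equiv.subtypeEquivRight fun w => ?_)
          constructor
          · exact And.right
          · intro h2
            refine ⟨?_, h2⟩
            rcases hmid x' y' hfar' w with hf | hf
            · exact e1 ▸ (colA x' w).2 hf
            · exact absurd (h2 ▸ (colA w y').2 hf) e2
        have b2 : Nat.card {w : G // WLiter c k w y = c₂}
            = Nat.card {w : G // WLiter c k w y' = c₂} := by
          refine Nat.card_congr ((Equiv.mulRight (y⁻¹ * y')).subtypeEquiv fun w => ?_)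
          simp only [Equiv.coe_mulRight]
          have := WLiter_transl c hct k w y (y⁻¹ * y')
          rw [show y * (y⁻¹ * y') = y' by group] at this
          rw [this]
        omega
      · -- c₂ far colour, c₁ not
        have r1 : Nat.card {w : G // WLiter c k x w = c₁ ∧ WLiter c k w y = c₂}
            = Nat.card {w : G // WLiter c k x w = c₁} := by
          refine Nat.card_congr (Equiv.subtypeEquivRight fun w => ?_)
          constructor
          · exact And.left
          · intro h1'
            refine ⟨h1', ?_⟩
            rcases hmid x y hfar w with hf | hf
            · exact absurd (h1' ▸ (colA x w).2 hf) e1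
            · exact e2 ▸ (colA w y).2 hf
        have r2 : Nat.card {w : G // WLiter c k x' w = c₁ ∧ WLiter c k w y' = c₂}
            = Nat.card {w : G // WLiter c k x' w = c₁} := by
          refine Nat.card_congr (Equiv.subtypeEquivRight fun w => ?_)
          constructor
          · exact And.left
          · intro h1'
            refine ⟨h1', ?_⟩
            rcases hmid x' y' hfar' w with hf | hf
            · exact absurd (h1' ▸ (colA x' w).2 hf) e1
            · exact e2 ▸ (colA w y').2 hf
        have b1 : Nat.card {w : G // WLiter c k x w = c₁}
            = Nat.card {w : G // WLiter c k x' w = c₁} := by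
          refine Nat.card_congr ((Equiv.mulRight (x⁻¹ * x')).subtypeEquiv fun w => ?_)
          simp only [Equiv.coe_mulRight]
          have := WLiter_transl c hct k x w (x⁻¹ * x')
          rw [show x * (x⁻¹ * x') = x' by group] at this
          rw [this]
        omega
      · -- neither is the far colour: both counts are zero
        have z : ∀ x₀ y₀ : G, (∀ m ≤ 2 ^ (k + 1), ¬ dWalk R m x₀ y₀) →
            Nat.card {w : G // WLiter c k x₀ w = c₁ ∧ WLiter c k w y₀ = c₂} = 0 := by
          intro x₀ y₀ hf
          have : IsEmpty {w : G // WLiter c k x₀ w = c₁ ∧ WLiter c k w y₀ = c₂} := by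
            refine ⟨fun ⟨w, hw1, hw2⟩ => ?_⟩
            rcases hmid x₀ y₀ hf w with hg | hg
            · exact e1 (hw1 ▸ (colA x₀ w).2 hg)
            · exact e2 (hw2 ▸ (colA w y₀).2 hg)
          exact Nat.card_of_isEmpty
        rw [z x y hfar, z x' y' hfar']
    · -- a far pair and a near pair get different colours
      intro hnear'
      by_cases hf' : ∀ m ≤ 2 ^ k, ¬ dWalk R m x' y'
      · -- midpoint argument
        push_neg at hnear'
        obtain ⟨m, hm, hw⟩ := hnear'
        obtain ⟨w, hw1, hw2⟩ := dWalk_split' (min m (2 ^ k)) (min_le_left _ _) hw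
        have hn1 : ¬ ∀ m' ≤ 2 ^ k, ¬ dWalk R m' x' w := fun hco =>
          hco _ (min_le_right _ _) hw1
        have hn2 : ¬ ∀ m' ≤ 2 ^ k, ¬ dWalk R m' w y' := fun hco =>
          hco _ (by omega) hw2
        intro hEq
        simp only [WLiter] at hEq
        have hEq2 : (fun c₁ c₂ => Nat.card {w : G // WLiter c k x w = c₁ ∧ WLiter c k w y = c₂})
            = (fun c₁ c₂ => Nat.card {w : G // WLiter c k x' w = c₁ ∧ WLiter c k w y' = c₂}) :=
          congrArg Prod.snd hEq
        have hcount := congrFun (congrFun hEq2 (WLiter c k x' w)) (WLiter c k w y')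
        have hzero : Nat.card {u : G // WLiter c k x u = WLiter c k x' w ∧
            WLiter c k u y = WLiter c k w y'} = 0 := by
          have : IsEmpty {u : G // WLiter c k x u = WLiter c k x' w ∧
              WLiter c k u y = WLiter c k w y'} := by
            refine ⟨fun ⟨u, hu1, hu2⟩ => ?_⟩
            rcases hmid x y hfar u with hg | hg
            · exact hn1 ((colA x' w).1 (hu1 ▸ (colA x u).2 hg))
            · exact hn2 ((colA w y').1 (hu2 ▸ (colA u y).2 hg))
          exact Nat.card_of_isEmpty
        have hpos : 0 < Nat.card {u : G // WLiter c k x' u = WLiter c k x' w ∧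
            WLiter c k u y' = WLiter c k w y'} := by
          have : Nonempty {u : G // WLiter c k x' u = WLiter c k x' w ∧
              WLiter c k u y' = WLiter c k w y'} := ⟨⟨w, rfl, rfl⟩⟩
          exact Nat.card_pos
        omega
      · intro hEq
        simp only [WLiter] at hEq
        exact (IH x y x' y' hfarxy).2 hf' (congrArg Prod.fst hEq)

end MainWL

/-- In the Cayley configuration, any two pairs at distance greater than `2^k` have the
same Weisfeiler-Leman colour at step `k`. -/
theorem WL_cayley_far_pairs_equal {G : Type*} [Group G] [Finite G]
    (S : Set G) (he : (1 : G) ∈ S) (hinv : S⁻¹ = S)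
    (hgen : Subgroup.closure S = ⊤)
    (c : G → G → Option G)
    (hc1 : ∀ g₁ g₂ : G, g₂ * g₁⁻¹ ∈ S → c g₁ g₂ = some (g₂ * g₁⁻¹))
    (hc2 : ∀ g₁ g₂ : G, g₂ * g₁⁻¹ ∉ S → c g₁ g₂ = none)
    (R : G → G → Prop) (hR : ∀ g h : G, R g h ↔ ∃ s ∈ S, h = s * g)
    (k : ℕ) (g h g' h' : G)
    (hd : ∀ m : ℕ, m ≤ 2 ^ k → ¬ dWalk R m g h)
    (hd' : ∀ m : ℕ, m ≤ 2 ^ k → ¬ dWalk R m g' h') :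
    WLiter c k g h = WLiter c k g' h' := by
  exact (WL_far_main S he c hc1 hc2 R hR k g h g' h' hd).1 hd'
end
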